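/- arXiv:1501.01259 — 2 statements merged into one kernel-verified Lean document; each statement's English description precedes it below -/
import Mathlib

section
/- Let Γ be a graph and γ ∈ Z₁(Γ, ℤ) a 1-cycle induced by a circuit (a simple closed combinatorial path). If γ = α + β where α, β ∈ Z₁(Γ, ℤ) are disjoint 1-chains (no edge has nonzero coefficient in both α and β when written in the edge basis), then α = 0 or β = 0. -/
open Finsupp

/-- A (combinatorial, oriented) graph: the 1-skeleton data of a complex. -/
structure CombGraph where
  V : Type
  E : Type
  ends : E → V × V

/-- ℓ¹-norm of an integral chain. -/
def l1Z {α : Type} (c : α →₀ ℤ) : ℕ := c.sum fun _ v => v.natAbs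

/-- Two chains are disjoint if no basis element has nonzero coefficient in both. -/
def DisjointChains {α : Type} (a b : α →₀ ℤ) : Prop := ∀ x, a x = 0 ∨ b x = 0

namespace CombGraph

variable (Γ : CombGraph)

/-- Source vertex of a directed edge (an edge with an orientation bit). -/
def src (p : Γ.E × Bool) : Γ.V := if p.2 then (Γ.ends p.1).1 else (Γ.ends p.1).2

/-- Target vertex of a directed edge. -/
def tgt (p : Γ.E × Bool) : Γ.V := if p.2 then (Γ.ends p.1).2 else (Γ.ends p.1).1

/-- A nonempty cyclically-consecutive list of directed edges. -/
def IsClosedPath (l : List (Γ.E × Bool)) : Prop :=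
  l ≠ [] ∧ ∀ i : Fin l.length,
    Γ.tgt (l.get i) = Γ.src (l.get ⟨(↑i + 1) % l.length, Nat.mod_lt _ i.pos⟩)

/-- A circuit: a simple closed combinatorial path (no repeated edges or vertices). -/
def IsCircuit (l : List (Γ.E × Bool)) : Prop :=
  Γ.IsClosedPath l ∧ (l.map Prod.fst).Nodup ∧ (l.map Γ.src).Nodup

/-- The 1-cycle induced by a closed path: coefficient ±1 on each traversed edge. -/
noncomputable def pathCycle (l : List (Γ.E × Bool)) : Γ.E →₀ ℤ :=
  (l.map fun p => Finsupp.single p.1 (if p.2 then (1 : ℤ) else -1)).sum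

/-- The simplicial boundary map `C₁ → C₀`. -/
noncomputable def d1 (γ : Γ.E →₀ ℤ) : Γ.V →₀ ℤ :=
  γ.sum fun e c => c • (Finsupp.single (Γ.ends e).2 (1 : ℤ) - Finsupp.single (Γ.ends e).1 1)

/-- A 1-chain is a cycle if its boundary vanishes. -/
def IsCycle (γ : Γ.E →₀ ℤ) : Prop := Γ.d1 γ = 0

/-- A graph is fine if each edge lies in only finitely many circuits of each bounded length. -/
def Fine : Prop :=
  ∀ (e : Γ.E) (L : ℕ),
    {l : List (Γ.E × Bool) | Γ.IsCircuit l ∧ e ∈ l.map Prod.fst ∧ l.length ≤ L}.Finite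

/-- Walks from `u` to `v`. -/
def IsWalk : List (Γ.E × Bool) → Γ.V → Γ.V → Prop
  | [], u, v => u = v
  | p :: l, u, v => Γ.src p = u ∧ IsWalk l (Γ.tgt p) v

/-- Combinatorial distance in a graph (∞ if there is no walk). -/
noncomputable def gdist (u v : Γ.V) : ℕ∞ :=
  ⨅ l ∈ {l : List (Γ.E × Bool) | Γ.IsWalk l u v}, (l.length : ℕ∞)

def Connected : Prop := ∀ u v : Γ.V, Γ.gdist u v < ⊤

/-- Gromov hyperbolicity via the four-point condition. -/
def Hyperbolic : Prop :=
  ∃ δ : ℕ, ∀ x y z w : Γ.V,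
    Γ.gdist x y + Γ.gdist z w ≤
      max (Γ.gdist x z + Γ.gdist y w) (Γ.gdist x w + Γ.gdist y z) + (δ : ℕ∞)

end CombGraph

/-- A combinatorial 2-complex: a graph together with a set of 2-cells, each with a
boundary 1-chain. -/
structure TwoComplex extends toGraph : CombGraph where
  F : Type
  fb : F → E →₀ ℤ

namespace TwoComplex

variable (X : TwoComplex)

/-- The boundary map `C₂ → C₁` over ℤ. -/
noncomputable def d2 (μ : X.F →₀ ℤ) : X.E →₀ ℤ := μ.sum fun f c => c • X.fb f

/-- The filling norm `‖γ‖_∂` over ℤ (∞ if `γ` bounds no 2-chain). -/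
noncomputable def fillNorm (γ : X.E →₀ ℤ) : ℕ∞ :=
  ⨅ μ ∈ {μ : X.F →₀ ℤ | X.d2 μ = γ}, (l1Z μ : ℕ∞)

/-- The homological Dehn function of `X` over ℤ. -/
noncomputable def FV (k : ℕ) : ℕ∞ :=
  ⨆ γ ∈ {γ : X.E →₀ ℤ | X.toGraph.IsCycle γ ∧ l1Z γ ≤ k}, X.fillNorm γ

end TwoComplex

/-!
A 1-cycle `α` supported on the edges `e₀, …, eₙ₋₁` of a circuit is an integer multiple of the
circuit's cycle `γ`: writing `α = ∑ Sₖ • eₖ` with each `eₖ` oriented along the circuit, the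
boundary of `α` at the vertex where `eₖ` ends and `eₖ₊₁` starts is `Sₖ - Sₖ₊₁`, because the
vertices of a circuit are distinct. Disjointness makes `α` vanish off the circuit, so `α = c • γ`
and `β = (1 - c) • γ`; on any edge of the circuit one of `c`, `1 - c` must then be `0`.
-/

theorem Fin.apply_eq_apply_zero_of_forall_apply_add_one {n : ℕ} [NeZero n] {β : Type*}
    {f : Fin n → β} (h : ∀ j, f (j + 1) = f j) (j : Fin n) : f j = f 0 := by
  obtain ⟨m, rfl⟩ := Nat.exists_eq_succ_of_ne_zero (NeZero.ne n)
  induction j using Fin.induction with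
  | zero => rfl
  | succ i ih => rw [← Fin.coeSucc_eq_succ, h, ih]

/-- A 1-cycle on the `n`-gon with vertices `g 0, …, g (n - 1)` has constant coefficients. -/
theorem Fin.apply_eq_apply_zero_of_sum_smul_single_sub_eq_zero {V : Type*} {n : ℕ} [NeZero n]
    {g : Fin n → V} (hg : g.Injective) {S : Fin n → ℤ}
    (h : ∑ k, S k • (single (g (k + 1)) (1 : ℤ) - single (g k) 1) = 0) (j : Fin n) :
    S j = S 0 := by
  classical
  refine Fin.apply_eq_apply_zero_of_forall_apply_add_one (fun j => ?_) j
  have := DFunLike.congr_fun h (g (j + 1))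
  simp only [coe_finsetSum, Finset.sum_apply, Finsupp.smul_apply, Finsupp.sub_apply,
    single_apply, hg.eq_iff, add_left_inj, smul_eq_mul, mul_sub, Finset.sum_sub_distrib, mul_ite,
    mul_one, mul_zero, Finset.sum_ite_eq', Finset.mem_univ, if_true, coe_zero,
    Pi.zero_apply] at this
  linarith

theorem List.Nodup.injective_comp_get {α β : Type*} {f : α → β} {l : List α}
    (h : (l.map f).Nodup) : Function.Injective fun k => f (l.get k) := fun _ _ hij =>
  (h.of_map f).injective_get (List.inj_on_of_nodup_map h (l.get_mem _) (l.get_mem _) hij)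

namespace CombGraph

variable {Γ : CombGraph}

def sign (p : Γ.E × Bool) : ℤ := if p.2 then 1 else -1

theorem sign_mul_self (p : Γ.E × Bool) : sign p * sign p = 1 := by
  unfold sign; split_ifs <;> norm_num

noncomputable def dirEdgeChain (p : Γ.E × Bool) : Γ.E →₀ ℤ := single p.1 (sign p)

theorem pathCycle_eq_sum_dirEdgeChain (l : List (Γ.E × Bool)) :
    Γ.pathCycle l = ∑ k : Fin l.length, dirEdgeChain (l.get k) := by
  simp only [List.get_eq_getElem, Fin.sum_univ_fun_getElem]; rfl

theorem d1_eq_linearCombination (γ : Γ.E →₀ ℤ) :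
    Γ.d1 γ = linearCombination ℤ (fun e => single (Γ.ends e).2 1 - single (Γ.ends e).1 1) γ :=
  rfl

theorem d1_sum_smul_dirEdgeChain {ι : Type*} (s : Finset ι) (c : ι → ℤ) (p : ι → Γ.E × Bool) :
    Γ.d1 (∑ i ∈ s, c i • dirEdgeChain (p i)) =
      ∑ i ∈ s, c i • (single (Γ.tgt (p i)) 1 - single (Γ.src (p i)) 1) := by
  simp only [d1_eq_linearCombination, map_sum, map_zsmul, dirEdgeChain, linearCombination_single]
  refine Finset.sum_congr rfl fun i _ => ?_
  unfold sign tgt src; split_ifs <;> simp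

theorem pathCycle_cons (p : Γ.E × Bool) (l : List (Γ.E × Bool)) :
    Γ.pathCycle (p :: l) = dirEdgeChain p + Γ.pathCycle l :=
  List.sum_cons

theorem pathCycle_apply_of_not_mem (l : List (Γ.E × Bool)) {x : Γ.E}
    (hx : x ∉ l.map Prod.fst) : Γ.pathCycle l x = 0 := by
  induction l with
  | nil => rfl
  | cons q l ih =>
    simp only [List.map_cons, List.mem_cons, not_or] at hx
    simp [pathCycle_cons, dirEdgeChain, Ne.symm hx.1, ih hx.2]

theorem pathCycle_apply_of_mem {l : List (Γ.E × Bool)} (hl : (l.map Prod.fst).Nodup)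
    {p : Γ.E × Bool} (hp : p ∈ l) : Γ.pathCycle l p.1 = sign p := by
  induction l with
  | nil => cases hp
  | cons q l ih =>
    simp only [List.map_cons, List.nodup_cons] at hl
    rcases List.mem_cons.mp hp with rfl | hp
    · simp [pathCycle_cons, dirEdgeChain, pathCycle_apply_of_not_mem l hl.1]
    · have hne : q.1 ≠ p.1 := fun h => hl.1 (h ▸ List.mem_map_of_mem hp)
      simp [pathCycle_cons, dirEdgeChain, hne, ih hl.2 hp]

theorem IsClosedPath.tgt_get {l : List (Γ.E × Bool)} [NeZero l.length] (hl : Γ.IsClosedPath l)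
    (k : Fin l.length) : Γ.tgt (l.get k) = Γ.src (l.get (k + 1)) := by
  rw [hl.2 k]
  congr 2
  ext
  simp [Fin.val_add, Nat.add_mod]

theorem eq_sum_smul_dirEdgeChain {l : List (Γ.E × Bool)} (hl : (l.map Prod.fst).Nodup)
    {α : Γ.E →₀ ℤ} (hα : ∀ x ∉ l.map Prod.fst, α x = 0) :
    α = ∑ k : Fin l.length, (α (l.get k).1 * sign (l.get k)) • dirEdgeChain (l.get k) := by
  classical
  have hsupp : α.support ⊆ (l.map Prod.fst).toFinset := fun x hx => by
    by_contra h
    exact mem_support_iff.mp hx (hα x (by simpa using h))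
  calc α = α.sum single := (sum_single α).symm
    _ = ∑ x ∈ (l.map Prod.fst).toFinset, single x (α x) :=
      sum_of_support_subset α hsupp _ fun _ _ => single_zero _
    _ = _ := by
      rw [List.sum_toFinset _ hl, List.map_map, ← Fin.sum_univ_fun_getElem]
      refine Finset.sum_congr rfl fun k _ => ?_
      rw [dirEdgeChain, smul_single, smul_eq_mul, mul_assoc, sign_mul_self, mul_one]
      rfl

theorem IsCircuit.exists_eq_smul_pathCycle {l : List (Γ.E × Bool)} (hl : Γ.IsCircuit l)
    {α : Γ.E →₀ ℤ} (hα : Γ.IsCycle α) (hsupp : ∀ x ∉ l.map Prod.fst, α x = 0) :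
    ∃ c : ℤ, α = c • Γ.pathCycle l := by
  obtain ⟨hclosed, hedges, hvertices⟩ := hl
  have : NeZero l.length := ⟨(List.length_pos_iff.mpr hclosed.1).ne'⟩
  set S : Fin l.length → ℤ := fun k => α (l.get k).1 * sign (l.get k)
  have hdecomp : α = ∑ k, S k • dirEdgeChain (l.get k) := eq_sum_smul_dirEdgeChain hedges hsupp
  have hS : ∀ k, S k = S 0 := by
    refine Fin.apply_eq_apply_zero_of_sum_smul_single_sub_eq_zero hvertices.injective_comp_get ?_
    calc _ = Γ.d1 α := by simp only [hdecomp, d1_sum_smul_dirEdgeChain, hclosed.tgt_get]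
      _ = 0 := hα
  refine ⟨S 0, ?_⟩
  rw [hdecomp, pathCycle_eq_sum_dirEdgeChain, Finset.smul_sum]
  exact Finset.sum_congr rfl fun k _ => by rw [hS k]

theorem IsCircuit.pathCycle_ne_zero {l : List (Γ.E × Bool)} (hl : Γ.IsCircuit l) :
    Γ.pathCycle l ≠ 0 := by
  obtain ⟨p, hp⟩ := List.exists_mem_of_ne_nil l hl.1.1
  refine DFunLike.ne_iff.mpr ⟨p.1, ?_⟩
  rw [pathCycle_apply_of_mem hl.2.1 hp, sign]
  split_ifs <;> simp

end CombGraph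

theorem DisjointChains.left_apply_eq_zero {ι : Type} {a b : ι →₀ ℤ} (h : DisjointChains a b)
    {x : ι} (hx : a x + b x = 0) : a x = 0 := by
  rcases h x with ha | hb
  · exact ha
  · simpa [hb] using hx

theorem DisjointChains.eq_zero_or_eq_zero_of_eq_smul {ι : Type} {γ a b : ι →₀ ℤ}
    (h : DisjointChains a b) (hγ : γ ≠ 0) (hsum : γ = a + b) {c : ℤ} (ha : a = c • γ) :
    a = 0 ∨ b = 0 := by
  obtain ⟨x, hx : γ x ≠ 0⟩ := DFunLike.ne_iff.mp hγ
  have hb : b = (1 - c) • γ := by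
    rw [sub_smul, one_smul, ← ha, hsum]
    abel
  rcases h x with hax | hbx
  · left
    rw [ha] at hax ⊢
    rw [Finsupp.smul_apply, smul_eq_mul, mul_eq_zero, or_iff_left hx] at hax
    rw [hax, zero_smul]
  · right
    rw [hb] at hbx ⊢
    rw [Finsupp.smul_apply, smul_eq_mul, mul_eq_zero, or_iff_left hx] at hbx
    rw [hbx, zero_smul]

theorem circuit_cycle_no_disjoint_decomposition_general (Γ : CombGraph)
    (l : List (Γ.E × Bool)) (hl : Γ.IsCircuit l)
    (α β : Γ.E →₀ ℤ) (hα : Γ.IsCycle α)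
    (hdisj : DisjointChains α β) (hsum : Γ.pathCycle l = α + β) :
    α = 0 ∨ β = 0 := by
  have hsupp : ∀ x ∉ l.map Prod.fst, α x = 0 := fun x hx =>
    hdisj.left_apply_eq_zero <| by
      rw [← Finsupp.add_apply, ← hsum, CombGraph.pathCycle_apply_of_not_mem l hx]
  obtain ⟨c, hc⟩ := hl.exists_eq_smul_pathCycle hα hsupp
  exact hdisj.eq_zero_or_eq_zero_of_eq_smul hl.pathCycle_ne_zero hsum hc

/-- If a 1-cycle induced by a circuit decomposes as a sum of two
disjoint 1-cycles, then one of them is trivial. -/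
theorem circuit_cycle_no_disjoint_decomposition (Γ : CombGraph)
    (l : List (Γ.E × Bool)) (hl : Γ.IsCircuit l)
    (α β : Γ.E →₀ ℤ) (hα : Γ.IsCycle α) (hβ : Γ.IsCycle β)
    (hdisj : DisjointChains α β) (hsum : Γ.pathCycle l = α + β) :
    α = 0 ∨ β = 0 :=
  circuit_cycle_no_disjoint_decomposition_general Γ l hl α β hα hdisj hsum
end

section
/- Let X be a cell complex and Y ⊆ X a subcomplex with the same 1-skeleton, such that FV_{Y,ℤ}(k) < ∞ for all k and every 2-cell of X has boundary of ℓ¹-norm at most n. Set C = FV_{Y,ℤ}(n). Then FV_{X,ℤ}(k) and FV_{Y,ℤ}(k) satisfy FV_{Y,ℤ}(k) ≤ C·FV_{X,ℤ}(k) for every k; more precisely, any 2-chain μ ∈ C₂(X,ℤ) can be replaced by ν ∈ C₂(Y,ℤ) with ∂ν = ∂μ and ‖ν‖₁ ≤ C‖μ‖₁. -/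
open Finsupp

/-! Each 2-cell boundary of `X` is a cycle of norm at most `n`, so it bounds a 2-chain of `Y`
of norm at most `C`; substituting these fillings cell by cell turns any 2-chain `μ` of `X` into
a 2-chain of `Y` with the same boundary and norm at most `C‖μ‖₁`. For the Dehn functions, a cycle
that bounds in `Y` also bounds in `X ⊇ Y`, so it has an optimal filling in `X`, which is then
transported back to `Y`. -/

section l1Z

variable {α β : Type}

lemma l1Z_eq_sum_of_support_subset (c : α →₀ ℤ) {s : Finset α} (hs : c.support ⊆ s) :
    l1Z c = ∑ x ∈ s, (c x).natAbs :=
  sum_of_support_subset c hs _ fun _ _ => Int.natAbs_zero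

lemma l1Z_add_le (a b : α →₀ ℤ) : l1Z (a + b) ≤ l1Z a + l1Z b := by
  classical
  rw [l1Z_eq_sum_of_support_subset (a + b) support_add,
    l1Z_eq_sum_of_support_subset a Finset.subset_union_left,
    l1Z_eq_sum_of_support_subset b Finset.subset_union_right, ← Finset.sum_add_distrib]
  exact Finset.sum_le_sum fun x _ => Int.natAbs_add_le (a x) (b x)

lemma l1Z_smul (c : ℤ) (x : α →₀ ℤ) : l1Z (c • x) = c.natAbs * l1Z x := by
  classical
  rw [l1Z_eq_sum_of_support_subset (c • x) support_smul, l1Z, Finsupp.sum, Finset.mul_sum]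
  simp [Int.natAbs_mul]

lemma l1Z_single (a : α) (b : ℤ) : l1Z (single a b) = b.natAbs :=
  sum_single_index rfl

lemma l1Z_sum_le {ι : Type*} (s : Finset ι) (g : ι → α →₀ ℤ) :
    l1Z (∑ i ∈ s, g i) ≤ ∑ i ∈ s, l1Z (g i) := by
  classical
  induction s using Finset.induction_on with
  | empty => simp [l1Z]
  | insert i s hi ih =>
    rw [Finset.sum_insert hi, Finset.sum_insert hi]
    exact (l1Z_add_le _ _).trans (by gcongr)

lemma l1Z_mapDomain_le (f : α → β) (μ : α →₀ ℤ) : l1Z (mapDomain f μ) ≤ l1Z μ :=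
  calc l1Z (mapDomain f μ) ≤ ∑ a ∈ μ.support, l1Z (single (f a) (μ a)) := l1Z_sum_le _ _
    _ = l1Z μ := by simp only [l1Z_single]; rfl

lemma l1Z_linearCombination_le {v : α → β →₀ ℤ} {C : ℕ} (hv : ∀ a, l1Z (v a) ≤ C)
    (μ : α →₀ ℤ) : l1Z (linearCombination ℤ v μ) ≤ C * l1Z μ :=
  calc l1Z (linearCombination ℤ v μ) ≤ ∑ a ∈ μ.support, l1Z (μ a • v a) := l1Z_sum_le _ _
    _ = ∑ a ∈ μ.support, (μ a).natAbs * l1Z (v a) := by simp only [l1Z_smul]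
    _ ≤ ∑ a ∈ μ.support, (μ a).natAbs * C := by gcongr; exact hv _
    _ = C * l1Z μ := by rw [← Finset.sum_mul, mul_comm]; rfl

end l1Z

namespace TwoComplex

variable {X : TwoComplex}

lemma d2_eq_linearCombination (X : TwoComplex) (μ : X.F →₀ ℤ) :
    X.d2 μ = linearCombination ℤ X.fb μ :=
  (linearCombination_apply ℤ μ).symm

lemma fillNorm_le {γ : X.E →₀ ℤ} {μ : X.F →₀ ℤ} (h : X.d2 μ = γ) : X.fillNorm γ ≤ l1Z μ :=
  iInf₂_le μ h

lemma exists_d2_eq_l1Z_eq_fillNorm {γ : X.E →₀ ℤ} (h : X.fillNorm γ ≠ ⊤) :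
    ∃ μ, X.d2 μ = γ ∧ (l1Z μ : ℕ∞) = X.fillNorm γ := by
  rw [fillNorm, iInf_subtype'] at h ⊢
  have : Nonempty {μ : X.F →₀ ℤ // X.d2 μ = γ} := ENat.iInf_natCast_ne_top.mp h
  obtain ⟨⟨μ, hμ⟩, hmin⟩ := ENat.exists_eq_iInf fun μ : {μ : X.F →₀ ℤ // X.d2 μ = γ} =>
    (l1Z μ.1 : ℕ∞)
  exact ⟨μ, hμ, hmin⟩

lemma exists_d2_eq_l1Z_le_of_fillNorm_le {γ : X.E →₀ ℤ} {C : ℕ} (h : X.fillNorm γ ≤ C) :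
    ∃ μ, X.d2 μ = γ ∧ l1Z μ ≤ C := by
  obtain ⟨μ, hμ, hμγ⟩ := exists_d2_eq_l1Z_eq_fillNorm (h.trans_lt (ENat.natCast_lt_top C)).ne
  exact ⟨μ, hμ, by exact_mod_cast hμγ.trans_le h⟩

lemma fillNorm_le_FV {γ : X.E →₀ ℤ} {k : ℕ} (hγ : X.IsCycle γ) (hk : l1Z γ ≤ k) :
    X.fillNorm γ ≤ X.FV k :=
  le_iSup₂ (f := fun γ (_ : γ ∈ {γ : X.E →₀ ℤ | X.IsCycle γ ∧ l1Z γ ≤ k}) => X.fillNorm γ)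
    γ ⟨hγ, hk⟩

lemma exists_d2_eq_linearCombination {α : Type} {b : α → X.E →₀ ℤ} {C : ℕ}
    (hb : ∀ a, ∃ ν, X.d2 ν = b a ∧ l1Z ν ≤ C) (μ : α →₀ ℤ) :
    ∃ ν, X.d2 ν = linearCombination ℤ b μ ∧ l1Z ν ≤ C * l1Z μ := by
  choose ν hν hνC using hb
  refine ⟨linearCombination ℤ ν μ, ?_, l1Z_linearCombination_le hνC μ⟩
  rw [d2_eq_linearCombination, linearCombination_linearCombination]
  congr
  funext a
  rw [← hν a, d2_eq_linearCombination]

lemma fillNorm_le_of_subcomplex (Γ : CombGraph) {FX FY : Type} {fbX : FX → Γ.E →₀ ℤ}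
    {fbY : FY → Γ.E →₀ ℤ} {ι : FY → FX} (hsub : ∀ f, fbX (ι f) = fbY f) (γ : Γ.E →₀ ℤ) :
    (mk Γ FX fbX).fillNorm γ ≤ (mk Γ FY fbY).fillNorm γ := by
  refine le_iInf₂ fun ν (hν : (mk Γ FY fbY).d2 ν = γ) => ?_
  have hpush : (mk Γ FX fbX).d2 (mapDomain ι ν) = γ := by
    rw [← hν, d2_eq_linearCombination, d2_eq_linearCombination, linearCombination_mapDomain]
    exact congrArg (linearCombination ℤ · ν) (funext hsub)
  exact (fillNorm_le hpush).trans (by exact_mod_cast l1Z_mapDomain_le ι ν)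

end TwoComplex

theorem FV_subcomplex_bound_general (Γ : CombGraph) (FX FY : Type)
    (fbX : FX → Γ.E →₀ ℤ) (fbY : FY → Γ.E →₀ ℤ)
    (ι : FY → FX) (hsub : ∀ f, fbX (ι f) = fbY f)
    (hbdX : ∀ f : FX, Γ.d1 (fbX f) = 0)
    (n : ℕ) (hn : ∀ f : FX, l1Z (fbX f) ≤ n)
    (hfin : ∀ k : ℕ, (TwoComplex.mk Γ FY fbY).FV k < ⊤) :
    (∀ k : ℕ, (TwoComplex.mk Γ FY fbY).FV k ≤
        (TwoComplex.mk Γ FY fbY).FV n * (TwoComplex.mk Γ FX fbX).FV k) ∧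
    (∀ μ : FX →₀ ℤ, ∃ ν : FY →₀ ℤ,
        (TwoComplex.mk Γ FY fbY).d2 ν = (TwoComplex.mk Γ FX fbX).d2 μ ∧
        (l1Z ν : ℕ∞) ≤ (TwoComplex.mk Γ FY fbY).FV n * (l1Z μ : ℕ∞)) := by
  set X := TwoComplex.mk Γ FX fbX
  set Y := TwoComplex.mk Γ FY fbY
  obtain ⟨C, hC⟩ := ENat.ne_top_iff_exists.mp (hfin n).ne
  rw [← hC]
  have hcell : ∀ f, ∃ ν, Y.d2 ν = fbX f ∧ l1Z ν ≤ C := fun f =>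
    Y.exists_d2_eq_l1Z_le_of_fillNorm_le (hC ▸ Y.fillNorm_le_FV (hbdX f) (hn f))
  have hreplace : ∀ μ, ∃ ν, Y.d2 ν = X.d2 μ ∧ (l1Z ν : ℕ∞) ≤ C * l1Z μ := fun μ => by
    obtain ⟨ν, hν, hνC⟩ := Y.exists_d2_eq_linearCombination hcell μ
    exact ⟨ν, hν.trans (X.d2_eq_linearCombination μ).symm, by exact_mod_cast hνC⟩
  refine ⟨fun k => iSup₂_le fun γ ⟨hγ, hk⟩ => ?_, hreplace⟩
  have hY : Y.fillNorm γ ≠ ⊤ := ((Y.fillNorm_le_FV hγ hk).trans_lt (hfin k)).ne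
  obtain ⟨μ, hμ, hμX⟩ := X.exists_d2_eq_l1Z_eq_fillNorm
    (ne_top_of_le_ne_top hY (TwoComplex.fillNorm_le_of_subcomplex Γ hsub γ))
  obtain ⟨ν, hν, hνC⟩ := hreplace μ
  calc Y.fillNorm γ ≤ l1Z ν := TwoComplex.fillNorm_le (hν.trans hμ)
    _ ≤ C * l1Z μ := hνC
    _ ≤ C * X.FV k := by rw [hμX]; gcongr; exact X.fillNorm_le_FV hγ hk

/-- Let Y ⊆ X be a subcomplex with the same 1-skeleton Γ, with
FV_{Y,ℤ} finite-valued and all 2-cells of X of boundary norm at most n; put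
C = FV_{Y,ℤ}(n). Then FV_{Y,ℤ}(k) ≤ C · FV_{X,ℤ}(k) for all k; more precisely every
2-chain μ of X can be replaced by a 2-chain ν of Y with the same boundary and
‖ν‖₁ ≤ C·‖μ‖₁. -/
theorem FV_subcomplex_bound (Γ : CombGraph) (FX FY : Type)
    (fbX : FX → Γ.E →₀ ℤ) (fbY : FY → Γ.E →₀ ℤ)
    (ι : FY → FX) (hι : Function.Injective ι) (hsub : ∀ f, fbX (ι f) = fbY f)
    (hbdX : ∀ f : FX, Γ.d1 (fbX f) = 0)
    (n : ℕ) (hn : ∀ f : FX, l1Z (fbX f) ≤ n)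
    (hfin : ∀ k : ℕ, (TwoComplex.mk Γ FY fbY).FV k < ⊤) :
    (∀ k : ℕ, (TwoComplex.mk Γ FY fbY).FV k ≤
        (TwoComplex.mk Γ FY fbY).FV n * (TwoComplex.mk Γ FX fbX).FV k) ∧
    (∀ μ : FX →₀ ℤ, ∃ ν : FY →₀ ℤ,
        (TwoComplex.mk Γ FY fbY).d2 ν = (TwoComplex.mk Γ FX fbX).d2 μ ∧
        (l1Z ν : ℕ∞) ≤ (TwoComplex.mk Γ FY fbY).FV n * (l1Z μ : ℕ∞)) :=
  FV_subcomplex_bound_general Γ FX FY fbX fbY ι hsub hbdX n hn hfin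
end
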